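/- arXiv:2010.01645 — 4 statements merged into one kernel-verified Lean document; each statement's English description precedes it below -/
import Mathlib

section
/- Let G = (V, E) be a finite graph with |V| ≥ 3k such that between any two disjoint subsets S1, S2 ⊆ V each of size at least k there is an edge joining them. Then G has a connected component containing at least |V| - k + 1 vertices. -/
/-!
Call a vertex set closed if it is a union of connected components. Two disjoint sets of size
at least `k` are joined by an edge, so a closed set `S` cannot have both `S` and its complement
of size at least `k`. If some component has at least `k` vertices, its complement therefore has
fewer than `k`. Otherwise every component has fewer than `k` vertices, and adding components
one at a time produces a closed set of size in `[k, 2k)`, whose complement has more than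
`|V| - 2k ≥ k` vertices: a contradiction.
-/

open Finset

theorem Finset.exists_subset_le_sum_lt_two_mul {ι : Type*} (s : Finset ι) (f : ι → ℕ)
    {k : ℕ} (hk : 0 < k) (hf : ∀ i ∈ s, f i < k) (hs : k ≤ ∑ i ∈ s, f i) :
    ∃ t ⊆ s, k ≤ ∑ i ∈ t, f i ∧ ∑ i ∈ t, f i < 2 * k := by
  classical
  induction s using Finset.induction_on with
  | empty => rw [sum_empty] at hs; omega
  | insert a s ha ih =>
    rw [sum_insert ha] at hs
    by_cases hsk : k ≤ ∑ i ∈ s, f i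
    · obtain ⟨t, hts, ht⟩ := ih (fun i hi => hf i (mem_insert_of_mem hi)) hsk
      exact ⟨t, hts.trans (subset_insert a s), ht⟩
    · have hfa := hf a (mem_insert_self a s)
      exact ⟨insert a s, Subset.rfl, by rw [sum_insert ha]; omega⟩

namespace SimpleGraph

variable {V : Type*} [Fintype V] {G : SimpleGraph V}

theorem card_lt_or_card_compl_lt_of_adj_mem [DecidableEq V] {k : ℕ}
    (h : ∀ S1 S2 : Finset V, Disjoint S1 S2 → k ≤ S1.card → k ≤ S2.card →
      ∃ u ∈ S1, ∃ v ∈ S2, G.Adj u v)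
    {S : Finset V} (hS : ∀ u ∈ S, ∀ w, G.Adj u w → w ∈ S) : #S < k ∨ #Sᶜ < k := by
  by_contra! hk
  obtain ⟨u, hu, w, hw, huw⟩ := h S Sᶜ disjoint_compl_right hk.1 hk.2
  exact mem_compl.mp hw (hS u hu w huw)

theorem adj_mem_filter_connectedComponentMk_mem [DecidableEq G.ConnectedComponent]
    (t : Finset G.ConnectedComponent) {u w : V}
    (hu : u ∈ ({v | G.connectedComponentMk v ∈ t} : Finset V)) (huw : G.Adj u w) :
    w ∈ ({v | G.connectedComponentMk v ∈ t} : Finset V) := by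
  simpa [ConnectedComponent.connectedComponentMk_eq_of_adj huw] using hu

theorem ncard_reachable_eq_card_filter [DecidableEq G.ConnectedComponent] (v : V) :
    ({u | G.Reachable v u} : Set V).ncard =
      #({u | G.connectedComponentMk u = G.connectedComponentMk v} : Finset V) := by
  rw [← Set.ncard_coe_finset]
  congr 1
  ext u
  simp [reachable_comm]

end SimpleGraph

open SimpleGraph in
/-- If `|V| ≥ 3k` and every two disjoint vertex sets of size `k` are joined by an
edge, then the graph has a connected component with at least `|V| - k + 1` vertices. -/
theorem stmt_1 {V : Type*} [Fintype V] (G : SimpleGraph V) (k : ℕ)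
    (hV : 3 * k ≤ Fintype.card V)
    (h : ∀ S1 S2 : Finset V, Disjoint S1 S2 → k ≤ S1.card → k ≤ S2.card →
      ∃ u ∈ S1, ∃ v ∈ S2, G.Adj u v) :
    ∃ v : V, Fintype.card V - k + 1 ≤ ({u | G.Reachable v u} : Set V).ncard := by
  classical
  have hk : 0 < k := by
    by_contra! hk0
    simpa using h ∅ ∅ (by simp) (by simp [hk0]) (by simp [hk0])
  have hclosed (t : Finset G.ConnectedComponent) :
      #{v | G.connectedComponentMk v ∈ t} < k ∨
        Fintype.card V - #{v | G.connectedComponentMk v ∈ t} < k := by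
    rw [← card_compl]
    exact card_lt_or_card_compl_lt_of_adj_mem h fun _ hu _ =>
      adj_mem_filter_connectedComponentMk_mem t hu
  by_cases hlarge : ∃ v, k ≤ #{u | G.connectedComponentMk u = G.connectedComponentMk v}
  · obtain ⟨v, hv⟩ := hlarge
    have hcomp := hclosed {G.connectedComponentMk v}
    simp only [mem_singleton] at hcomp
    exact ⟨v, by rw [ncard_reachable_eq_card_filter]; omega⟩
  · push Not at hlarge
    have htotal : ∑ c, #{u | G.connectedComponentMk u = c} = Fintype.card V := by
      simpa using sum_card_fiberwise_eq_card_filter univ univ G.connectedComponentMk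
    obtain ⟨t, -, hkt, ht2k⟩ := exists_subset_le_sum_lt_two_mul univ
      (#{u | G.connectedComponentMk u = ·}) hk
      (fun c _ => c.ind fun v => hlarge v) (by omega)
    have hcard := sum_card_fiberwise_eq_card_filter univ t G.connectedComponentMk
    have hunion := hclosed t
    omega
end

section
/- Let G = (V, E) be a finite graph with |V| ≥ 3k such that between any two disjoint subsets of size at least k there is an edge. Then for any subset S3 ⊆ V with |S3| ≥ k, some vertex v ∈ S3 belongs to a connected component of size at least |V| - k + 1. -/
/-!
A vertex set `W` closed under adjacency sends no edge to its complement, so by the hypothesis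
`W` or its complement has fewer than `k` vertices. If the component of some `v ∈ S3` has at least
`k` vertices, its complement is therefore smaller than `k`. Otherwise every component meeting `S3`
is smaller than `k`, and adding these components one at a time produces a closed set with between
`k` and `2k - 1` vertices; its complement has more than `|V| - 2k ≥ k` vertices, a contradiction.
-/

open Finset

theorem Finset.exists_subset_le_card_biUnion_lt {ι α : Type*} [DecidableEq ι] [DecidableEq α]
    (f : ι → Finset α) {s : Finset ι} {k m : ℕ} (hk : 0 < k) (hf : ∀ i ∈ s, #(f i) ≤ m)
    (hs : k ≤ #(s.biUnion f)) :
    ∃ t ⊆ s, k ≤ #(t.biUnion f) ∧ #(t.biUnion f) < k + m := by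
  induction s using Finset.induction_on with
  | empty => simp only [biUnion_empty, card_empty] at hs; omega
  | insert a s _ ih =>
    by_cases hsk : k ≤ #(s.biUnion f)
    · obtain ⟨t, hts, ht⟩ := ih (fun i hi => hf i (mem_insert_of_mem hi)) hsk
      exact ⟨t, hts.trans (subset_insert a s), ht⟩
    · refine ⟨insert a s, Subset.rfl, hs, ?_⟩
      calc #((insert a s).biUnion f) = #(f a ∪ s.biUnion f) := by rw [biUnion_insert]
        _ ≤ #(f a) + #(s.biUnion f) := card_union_le _ _
        _ < k + m := by have := hf a (mem_insert_self a s); omega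

namespace SimpleGraph

variable {V : Type*} [Fintype V] [DecidableEq V] (G : SimpleGraph V)

theorem card_sub_lt_card_of_adj_closed {k : ℕ}
    (h : ∀ S1 S2 : Finset V, Disjoint S1 S2 → k ≤ S1.card → k ≤ S2.card →
      ∃ u ∈ S1, ∃ v ∈ S2, G.Adj u v)
    {W : Finset V} (hW : ∀ u ∈ W, ∀ w, G.Adj u w → w ∈ W) (hkW : k ≤ #W) :
    Fintype.card V - k < #W := by
  by_contra! hsmall
  have hcompl : k ≤ #Wᶜ := by rw [card_compl]; omega
  obtain ⟨u, hu, w, hw, huw⟩ := h W Wᶜ disjoint_compl_right hkW hcompl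
  exact mem_compl.mp hw (hW u hu w huw)

theorem mem_biUnion_reachable_of_adj [DecidableRel G.Reachable] {t : Finset V} {u w : V}
    (hu : u ∈ t.biUnion fun v => univ.filter (G.Reachable v)) (huw : G.Adj u w) :
    w ∈ t.biUnion fun v => univ.filter (G.Reachable v) := by
  simp only [mem_biUnion, mem_filter, mem_univ, true_and] at hu ⊢
  obtain ⟨v, hv, hvu⟩ := hu
  exact ⟨v, hv, hvu.trans huw.reachable⟩

omit [DecidableEq V] in
theorem ncard_setOf_reachable [DecidableRel G.Reachable] (v : V) :
    {u | G.Reachable v u}.ncard = #(univ.filter (G.Reachable v)) := by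
  rw [← Set.ncard_coe_finset, coe_filter]
  simp only [mem_univ, true_and]

end SimpleGraph

/-- If `|V| ≥ 3k` and every two disjoint vertex sets of size `k` are joined by an
edge, then every set of at least `k` vertices contains a vertex belonging to a
connected component of size at least `|V| - k + 1`. -/
theorem stmt_2 {V : Type*} [Fintype V] (G : SimpleGraph V) (k : ℕ) (hk : 0 < k)
    (hV : 3 * k ≤ Fintype.card V)
    (h : ∀ S1 S2 : Finset V, Disjoint S1 S2 → k ≤ S1.card → k ≤ S2.card →
      ∃ u ∈ S1, ∃ v ∈ S2, G.Adj u v) :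
    ∀ S3 : Finset V, k ≤ S3.card →
      ∃ v ∈ S3, Fintype.card V - k + 1 ≤ ({u | G.Reachable v u} : Set V).ncard := by
  classical
  intro S3 hS3
  set C : V → Finset V := fun v => univ.filter (G.Reachable v)
  by_contra! hsmall
  replace hsmall : ∀ v ∈ S3, #(C v) < Fintype.card V - k + 1 := by
    simpa only [G.ncard_setOf_reachable] using hsmall
  have hclosed (t : Finset V) : ∀ u ∈ t.biUnion C, ∀ w, G.Adj u w → w ∈ t.biUnion C :=
    fun _ hu _ huw => G.mem_biUnion_reachable_of_adj hu huw
  have hCk : ∀ v ∈ S3, #(C v) ≤ k := fun v hv => by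
    have hCv := hclosed {v}
    rw [singleton_biUnion] at hCv
    by_contra! hkC
    have := G.card_sub_lt_card_of_adj_closed h hCv hkC.le
    have := hsmall v hv
    omega
  have hS3C : k ≤ #(S3.biUnion C) :=
    hS3.trans (card_le_card fun v hv => mem_biUnion.mpr ⟨v, hv, by simp [C]⟩)
  obtain ⟨t, -, hkt, htk⟩ := exists_subset_le_card_biUnion_lt C hk hCk hS3C
  have := G.card_sub_lt_card_of_adj_closed h (hclosed t) hkt
  omega
end

section
/- Let G = (V, E) be a finite graph with |V| ≥ 3k such that between any two disjoint subsets of size at least k there is an edge. Then for any subset S3 ⊆ V with |S3| ≥ k, there exists a vertex v ∈ S3 such that G contains a simple path starting at v on at least |V| - 2k vertices. -/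
/-!
Run depth-first search, starting at a vertex of `S3` and, whenever the stack empties, restarting
at an unvisited vertex of `S3` while one remains. At every moment there is no edge between the
finished set `S` and the unvisited set `T`, and the stack is a path from the current root. Each
step lowers `|T| - |S|` by one, so at some moment `|S| ≤ |T| ≤ |S| + 1`. The hypothesis then
forces `|S| < k`, hence `|T| ≤ k` and the stack holds at least `|V| - 2k + 1` vertices. Since
fewer than `k` vertices are finished, `S3` was not yet exhausted when the current root was chosen,
so the root lies in `S3`.
-/

open Finset

lemma exists_mem_and_mem_or_le_card_of_cover {V : Type*} {k : ℕ} {A S T : Finset V} (hA : k ≤ #A)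
    (hcover : ∀ z, z ∈ S ∨ z ∈ T) (hT : T.Nonempty) : ∃ r ∈ T, r ∈ A ∨ k ≤ #S := by
  by_cases hAT : ∃ r ∈ T, r ∈ A
  · obtain ⟨r, hrT, hrA⟩ := hAT
    exact ⟨r, hrT, Or.inl hrA⟩
  · push Not at hAT
    obtain ⟨r, hrT⟩ := hT
    have hAS : A ⊆ S := fun z hz => (hcover z).resolve_right fun hzT => hAT z hzT hz
    exact ⟨r, hrT, Or.inr (hA.trans (card_le_card hAS))⟩

namespace SimpleGraph

variable {V : Type*} {G : SimpleGraph V} {k : ℕ}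

def JoinsLargeSets (G : SimpleGraph V) (k : ℕ) : Prop :=
  ∀ S1 S2 : Finset V, Disjoint S1 S2 → k ≤ #S1 → k ≤ #S2 → ∃ u ∈ S1, ∃ v ∈ S2, G.Adj u v

lemma JoinsLargeSets.card_lt_of_forall_not_adj (hG : G.JoinsLargeSets k) {S T : Finset V}
    (hST : Disjoint S T) (hno : ∀ a ∈ S, ∀ b ∈ T, ¬G.Adj a b) (hS : k ≤ #S) : #T < k := by
  by_contra! hT
  obtain ⟨a, ha, b, hb, hab⟩ := hG S T hST hS hT
  exact hno a ha b hb hab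

/-- A state of depth-first search: `S` is finished, `T` is unvisited, and the stack `p` is read
from its top `x` down to the root `r`. -/
structure IsDFSState (G : SimpleGraph V) (S T : Finset V) {x r : V} (p : G.Walk x r) : Prop where
  isPath : p.IsPath
  disjoint : Disjoint S T
  notMem_support : ∀ z ∈ T, z ∉ p.support
  not_adj : ∀ a ∈ S, ∀ b ∈ T, ¬G.Adj a b
  cover : ∀ z, z ∈ S ∨ z ∈ T ∨ z ∈ p.support

namespace IsDFSState

variable [DecidableEq V] {S T : Finset V} {x r : V} {p : G.Walk x r}

lemma nil_erase [Fintype V] (r : V) : G.IsDFSState ∅ (univ.erase r) (Walk.nil : G.Walk r r) where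
  isPath := Walk.IsPath.nil
  disjoint := disjoint_empty_left _
  notMem_support z hz := by simpa using ne_of_mem_erase hz
  not_adj := by simp
  cover z := by by_cases hz : z = r <;> simp [hz]

lemma push (hD : G.IsDFSState S T p) {y : V} (hy : y ∈ T) (hxy : G.Adj x y) :
    G.IsDFSState S (T.erase y) (p.cons hxy.symm) where
  isPath := hD.isPath.cons (hD.notMem_support y hy)
  disjoint := hD.disjoint.mono_right (erase_subset y T)
  notMem_support z hz := by
    simp only [Walk.support_cons, List.mem_cons, not_or]
    exact ⟨ne_of_mem_erase hz, hD.notMem_support z (mem_of_mem_erase hz)⟩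
  not_adj a ha b hb := hD.not_adj a ha b (mem_of_mem_erase hb)
  cover z := by
    by_cases hzy : z = y
    · simp [hzy]
    · rcases hD.cover z with hz | hz | hz <;> simp [hz, hzy]

lemma disjoint_insert (hD : G.IsDFSState S T p) : Disjoint (insert x S) T :=
  disjoint_insert_left.2 ⟨fun hxT => hD.notMem_support x hxT p.start_mem_support, hD.disjoint⟩

lemma not_adj_insert (hD : G.IsDFSState S T p) (hx : ∀ b ∈ T, ¬G.Adj x b) :
    ∀ a ∈ insert x S, ∀ b ∈ T, ¬G.Adj a b := by
  intro a ha b hb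
  rcases mem_insert.1 ha with rfl | ha
  · exact hx b hb
  · exact hD.not_adj a ha b hb

lemma pop {y : V} {hxy : G.Adj x y} {p : G.Walk y r} (hD : G.IsDFSState S T (p.cons hxy))
    (hx : ∀ b ∈ T, ¬G.Adj x b) : G.IsDFSState (insert x S) T p where
  isPath := hD.isPath.of_cons
  disjoint := hD.disjoint_insert
  notMem_support z hz hzp := hD.notMem_support z hz (by simp [hzp])
  not_adj := hD.not_adj_insert hx
  cover z := by
    rcases hD.cover z with hz | hz | hz
    · exact Or.inl (mem_insert_of_mem hz)
    · exact Or.inr (Or.inl hz)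
    · rcases (Walk.mem_support_iff _).1 hz with rfl | hz
      · exact Or.inl (mem_insert_self _ _)
      · exact Or.inr (Or.inr hz)

lemma cover_of_nil (hD : G.IsDFSState S T (Walk.nil : G.Walk x x)) :
    ∀ z, z ∈ insert x S ∨ z ∈ T := by
  intro z
  rcases hD.cover z with hz | hz | hz
  · exact Or.inl (mem_insert_of_mem hz)
  · exact Or.inr hz
  · exact Or.inl (mem_insert.2 (Or.inl (by simpa using hz)))

lemma restart (hD : G.IsDFSState S T (Walk.nil : G.Walk x x)) (hx : ∀ b ∈ T, ¬G.Adj x b)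
    (r : V) : G.IsDFSState (insert x S) (T.erase r) (Walk.nil : G.Walk r r) where
  isPath := Walk.IsPath.nil
  disjoint := hD.disjoint_insert.mono_right (erase_subset r T)
  notMem_support z hz := by simpa using ne_of_mem_erase hz
  not_adj a ha b hb := hD.not_adj_insert hx a ha b (mem_of_mem_erase hb)
  cover z := by
    by_cases hzr : z = r
    · simp [hzr]
    · rcases hD.cover_of_nil z with hz | hz <;> simp [hz, hzr]

lemma card_le [Fintype V] (hD : G.IsDFSState S T p) :
    Fintype.card V ≤ #S + #T + p.support.length :=
  calc Fintype.card V = #(S ∪ T ∪ p.support.toFinset) := by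
        rw [← card_univ]
        congr 1
        ext z
        simpa [or_assoc] using hD.cover z
    _ ≤ #S + #T + #p.support.toFinset :=
        (card_union_le _ _).trans (by gcongr; exact card_union_le _ _)
    _ ≤ #S + #T + p.support.length := by gcongr; exact List.toFinset_card_le _

end IsDFSState

variable [DecidableEq V]

theorem JoinsLargeSets.exists_isPath_of_isDFSState [Fintype V] (hG : G.JoinsLargeSets k)
    {A : Finset V} (hA : k ≤ #A) {S T : Finset V} {x r : V} {p : G.Walk x r}
    (hD : G.IsDFSState S T p) (hle : #S ≤ #T) (hroot : r ∈ A ∨ k ≤ #S) :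
    ∃ v ∈ A, ∃ (u : V) (w : G.Walk v u), w.IsPath ∧
      Fintype.card V - 2 * k ≤ w.support.length := by
  by_cases hstop : #T ≤ #S + 1
  · have hS : #S < k := by
      by_contra! hS
      have := hG.card_lt_of_forall_not_adj hD.disjoint hD.not_adj hS
      omega
    have := hD.card_le
    refine ⟨r, hroot.resolve_right (by omega), x, p.reverse, hD.isPath.reverse, ?_⟩
    rw [Walk.support_reverse, List.length_reverse]
    omega
  by_cases hext : ∃ y ∈ T, G.Adj x y
  · obtain ⟨y, hyT, hxy⟩ := hext
    have hTy : #(T.erase y) + 1 = #T := card_erase_add_one hyT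
    exact hG.exists_isPath_of_isDFSState hA (hD.push hyT hxy) (by omega) hroot
  push Not at hext
  have hSx : #(insert x S) ≤ #S + 1 := card_insert_le x S
  cases p with
  | nil =>
    obtain ⟨r', hr'T, hr'⟩ :=
      exists_mem_and_mem_or_le_card_of_cover hA hD.cover_of_nil (card_pos.1 (by omega))
    have hTr' : #(T.erase r') + 1 = #T := card_erase_add_one hr'T
    exact hG.exists_isPath_of_isDFSState hA (hD.restart hext r') (by omega) hr'
  | cons hxy p' =>
    exact hG.exists_isPath_of_isDFSState hA (hD.pop hext) (by omega)
      (hroot.imp_right fun h => h.trans (card_le_card (subset_insert x S)))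
termination_by 2 * #T + p.length

end SimpleGraph

theorem stmt_3_general {V : Type*} [Fintype V] (G : SimpleGraph V) (k : ℕ) (hk : 0 < k)
    (h : ∀ S1 S2 : Finset V, Disjoint S1 S2 → k ≤ S1.card → k ≤ S2.card →
      ∃ u ∈ S1, ∃ v ∈ S2, G.Adj u v) :
    ∀ S3 : Finset V, k ≤ S3.card →
      ∃ v ∈ S3, ∃ (u : V) (w : G.Walk v u), w.IsPath ∧
        Fintype.card V - 2 * k ≤ w.support.length := by
  classical
  intro S3 hS3
  obtain ⟨r, hr⟩ := card_pos.1 (hk.trans_le hS3)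
  exact SimpleGraph.JoinsLargeSets.exists_isPath_of_isDFSState h hS3
    (SimpleGraph.IsDFSState.nil_erase r) (by simp) (Or.inl hr)

/-- If `|V| ≥ 3k` and every two disjoint vertex sets of size `k` are joined by an
edge, then every set of at least `k` vertices contains a vertex from which there is
a simple path on at least `|V| - 2k` vertices. -/
theorem stmt_3 {V : Type*} [Fintype V] (G : SimpleGraph V) (k : ℕ) (hk : 0 < k)
    (hV : 3 * k ≤ Fintype.card V)
    (h : ∀ S1 S2 : Finset V, Disjoint S1 S2 → k ≤ S1.card → k ≤ S2.card →
      ∃ u ∈ S1, ∃ v ∈ S2, G.Adj u v) :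
    ∀ S3 : Finset V, k ≤ S3.card →
      ∃ v ∈ S3, ∃ (u : V) (w : G.Walk v u), w.IsPath ∧
        Fintype.card V - 2 * k ≤ w.support.length :=
  stmt_3_general G k hk h
end

section
/- Let p ∈ (0,1) and c > 100, and set n = ⌈1.2c/p⌉ and k = ⌈0.1c/p⌉. In the Erdős–Rényi random graph G(n, p), the probability that there exist two disjoint vertex subsets of size k with no edge between them is at most (n choose k)·(n−k choose k)·(1−p)^{k²} ≤ ((12e)²·e^{−0.1c})^k ≤ e^{−30}. Consequently, with probability at least 1 − e^{−30}, G(n, p) contains a simple path on at least c/p vertices. -/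
/-!
Depth-first search keeps a stack that is a path, a set `S` of finished vertices and a set `U` of
unvisited ones, with no edge between `S` and `U`. Stopped at the first moment `#S = #U`, both sets
have fewer than `k` elements when every two disjoint `k`-sets are joined by an edge, so the stack
holds more than `n - 2k` vertices. In `G(n, p)` the union bound over pairs of disjoint `k`-sets
bounds the failure probability by `(n choose k) (n - k choose k) (1 - p)^(k²)`, and with
`n ≤ 12k`, `pk ≥ c / 10` this is at most `((12e)² e^(-c/10))^k ≤ e^(-30)`.
-/

open Finset MeasureTheory Real

lemma Finset.insert_union_toFinset {V : Type*} [DecidableEq V] (v : V) (S : Finset V)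
    (T : List V) : insert v S ∪ T.toFinset = S ∪ (v :: T).toFinset := by
  simp [insert_union, union_insert]

namespace SimpleGraph

variable {V : Type*} [DecidableEq V] {G : SimpleGraph V} {S : Finset V} {T : List V}

/-- A state of depth-first search: `S` is the set of finished vertices, `T` the stack (top first),
and the vertices outside `S ∪ T` are the unvisited ones. -/
structure IsDFSState_s6 (G : SimpleGraph V) (S : Finset V) (T : List V) : Prop where
  isChain : T.IsChain G.Adj
  nodup : T.Nodup
  not_adj : ∀ a ∈ S, ∀ b ∉ S ∪ T.toFinset, ¬ G.Adj a b

lemma isDFSState_empty : G.IsDFSState_s6 ∅ [] := ⟨.nil, .nil, by simp⟩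

lemma IsDFSState_s6.push (h : G.IsDFSState_s6 S T) {u : V} (hu : u ∉ S ∪ T.toFinset)
    (hT : (u :: T).IsChain G.Adj) : G.IsDFSState_s6 S (u :: T) where
  isChain := hT
  nodup := List.nodup_cons.2 ⟨by simp_all, h.nodup⟩
  not_adj a ha b hb := h.not_adj a ha b (by simp_all)

lemma IsDFSState_s6.pop {v : V} (h : G.IsDFSState_s6 S (v :: T))
    (hv : ∀ b ∉ S ∪ (v :: T).toFinset, ¬ G.Adj v b) : G.IsDFSState_s6 (insert v S) T where
  isChain := h.isChain.tail
  nodup := h.nodup.of_cons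
  not_adj a ha b hb := by
    rw [insert_union_toFinset] at hb
    obtain rfl | ha := mem_insert.1 ha
    exacts [hv b hb, h.not_adj a ha b hb]

variable [Fintype V]

/-- A push lowers the number of unvisited vertices by one and a pop raises `#S` by at most one,
so running the search from a state with `#S ≤ #U` reaches `#S = #U`; `2 * #U + #T` decreases. -/
lemma IsDFSState_s6.exists_card_eq (h : G.IsDFSState_s6 S T) (hS : #S ≤ #(S ∪ T.toFinset)ᶜ) :
    ∃ S' T', G.IsDFSState_s6 S' T' ∧ #S' = #(S' ∪ T'.toFinset)ᶜ := by
  induction hN : 2 * #(S ∪ T.toFinset)ᶜ + T.length using Nat.strong_induction_on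
    generalizing S T with
  | _ N ih =>
  obtain hS | hS := hS.eq_or_lt
  · exact ⟨S, T, h, hS⟩
  by_cases hpush : ∃ u ∉ S ∪ T.toFinset, (u :: T).IsChain G.Adj
  · obtain ⟨u, hu, hT⟩ := hpush
    have hcard : #(S ∪ (u :: T).toFinset)ᶜ + 1 = #(S ∪ T.toFinset)ᶜ := by
      rw [List.toFinset_cons, union_insert, card_compl, card_compl, card_insert_of_notMem hu]
      have := card_le_univ (insert u (S ∪ T.toFinset))
      rw [card_insert_of_notMem hu] at this
      omega
    refine ih _ ?_ (h.push hu hT) (by omega) rfl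
    rw [← hN, List.length_cons]
    omega
  · push Not at hpush
    obtain ⟨u, hu⟩ : (S ∪ T.toFinset)ᶜ.Nonempty := card_pos.1 (by omega)
    cases T with
    | nil => exact (hpush u (by simpa using hu) (List.isChain_singleton u)).elim
    | cons v T =>
      have hv : ∀ b ∉ S ∪ (v :: T).toFinset, ¬ G.Adj v b := fun b hb hvb =>
        hpush b hb (List.isChain_cons_cons.2 ⟨hvb.symm, h.isChain⟩)
      have hU := insert_union_toFinset v S T
      refine ih _ ?_ (h.pop hv) ?_ rfl
      · rw [hU, ← hN, List.length_cons]
        omega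
      · have := card_insert_le v S
        rw [hU]
        omega

lemma exists_isPath_of_forall_exists_adj (k : ℕ) (hk : 2 * k ≤ Fintype.card V)
    (h : ∀ S₁ S₂ : Finset V, Disjoint S₁ S₂ → #S₁ = k → #S₂ = k → ∃ a ∈ S₁, ∃ b ∈ S₂, G.Adj a b) :
    ∃ u v, ∃ w : G.Walk u v, w.IsPath ∧ Fintype.card V < w.length + 2 * k := by
  obtain ⟨S, T, hST, hcard⟩ := isDFSState_empty.exists_card_eq (G := G) (by simp)
  have hSk : #S < k := by
    by_contra! hkS
    obtain ⟨S₁, hS₁, hS₁k⟩ := exists_subset_card_eq hkS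
    obtain ⟨S₂, hS₂, hS₂k⟩ := exists_subset_card_eq (hcard ▸ hkS)
    have hd : Disjoint S₁ S₂ :=
      (disjoint_compl_right_iff.2 subset_union_left).mono hS₁ hS₂
    obtain ⟨a, ha, b, hb, hab⟩ := h S₁ S₂ hd hS₁k hS₂k
    exact hST.not_adj a (hS₁ ha) b (mem_compl.1 (hS₂ hb)) hab
  have hT : Fintype.card V ≤ #S + T.length + #(S ∪ T.toFinset)ᶜ := by
    have := card_union_le S T.toFinset
    have := T.toFinset_card_le
    rw [card_compl]
    omega
  obtain _ | ⟨a, l⟩ := T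
  · simp only [List.length_nil] at hT
    omega
  · let w := Walk.ofSupport (a :: l) (List.cons_ne_nil a l) hST.isChain
    refine ⟨_, _, w, ?_, ?_⟩
    · rw [Walk.isPath_def, Walk.support_ofSupport]
      exact hST.nodup
    · have := w.length_support
      rw [Walk.support_ofSupport] at this
      omega

end SimpleGraph

lemma MeasureTheory.Measure.pi_setOf_forall_mem_eq {ι : Type*} [Fintype ι] {α : ι → Type*}
    [∀ i, MeasurableSpace (α i)] (μ : ∀ i, Measure (α i)) [∀ i, IsProbabilityMeasure (μ i)]
    (s : Finset ι) (a : ∀ i, α i) :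
    Measure.pi μ {ω | ∀ i ∈ s, ω i = a i} = ∏ i ∈ s, μ i {a i} := by
  rw [← Measure.pi_pi_finset]
  congr 1

lemma card_image_sym2_product {V : Type*} [DecidableEq V] {S₁ S₂ : Finset V}
    (hd : Disjoint S₁ S₂) : #((S₁ ×ˢ S₂).image fun x => s(x.1, x.2)) = #S₁ * #S₂ := by
  rw [card_image_of_injOn, card_product]
  rintro ⟨a, b⟩ hab ⟨a', b'⟩ hab' h
  simp only [coe_product, Set.mem_prod, mem_coe] at hab hab'
  obtain ⟨rfl, rfl⟩ | ⟨rfl, rfl⟩ := Sym2.eq_iff.1 h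
  · rfl
  · exact (disjoint_left.1 hd hab.1 hab'.2).elim

section RandomGraph

variable {V α : Type*} [Fintype V] [DecidableEq V] [MeasurableSpace α]
  (μ : Measure α) [IsProbabilityMeasure μ]

lemma measure_pi_forall_sym2_eq {S₁ S₂ : Finset V} (hd : Disjoint S₁ S₂) (a : α) :
    Measure.pi (fun _ : Sym2 V => μ) {ω | ∀ u ∈ S₁, ∀ v ∈ S₂, ω s(u, v) = a}
      = μ {a} ^ (#S₁ * #S₂) := by
  rw [← card_image_sym2_product hd, ← prod_const,
    ← Measure.pi_setOf_forall_mem_eq _ _ fun _ => a]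
  congr 2
  ext ω
  simp only [forall_mem_image, mem_product, and_imp, Prod.forall]
  exact ⟨fun h u v hu hv => h u hu v hv, fun h u hu v hv => h u v hu hv⟩

lemma measure_pi_exists_disjoint_forall_sym2_eq_le (k : ℕ) (a : α) :
    Measure.pi (fun _ : Sym2 V => μ) {ω | ∃ S₁ S₂ : Finset V, Disjoint S₁ S₂ ∧ #S₁ = k ∧
        #S₂ = k ∧ ∀ u ∈ S₁, ∀ v ∈ S₂, ω s(u, v) = a}
      ≤ (Fintype.card V).choose k * (Fintype.card V - k).choose k * μ {a} ^ (k ^ 2) := by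
  set A : Finset V → Finset V → Set (Sym2 V → α) :=
    fun S₁ S₂ => {ω | ∀ u ∈ S₁, ∀ v ∈ S₂, ω s(u, v) = a}
  have hsub : {ω | ∃ S₁ S₂ : Finset V, Disjoint S₁ S₂ ∧ #S₁ = k ∧ #S₂ = k ∧
      ∀ u ∈ S₁, ∀ v ∈ S₂, ω s(u, v) = a}
      ⊆ ⋃ S₁ ∈ univ.powersetCard k, ⋃ S₂ ∈ (univ \ S₁).powersetCard k, A S₁ S₂ := by
    rintro ω ⟨S₁, S₂, hd, hS₁, hS₂, hω⟩
    simp only [Set.mem_iUnion, mem_powersetCard, subset_sdiff]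
    exact ⟨S₁, ⟨subset_univ _, hS₁⟩, S₂, ⟨⟨subset_univ _, hd.symm⟩, hS₂⟩, hω⟩
  calc _ ≤ Measure.pi (fun _ : Sym2 V => μ)
        (⋃ S₁ ∈ univ.powersetCard k, ⋃ S₂ ∈ (univ \ S₁).powersetCard k, A S₁ S₂) :=
        measure_mono hsub
    _ ≤ ∑ S₁ ∈ univ.powersetCard k, ∑ S₂ ∈ (univ \ S₁).powersetCard k,
          Measure.pi (fun _ : Sym2 V => μ) (A S₁ S₂) :=
        (measure_biUnion_finset_le _ _).trans (sum_le_sum fun _ _ => measure_biUnion_finset_le _ _)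
    _ = ∑ S₁ ∈ univ.powersetCard k, ∑ S₂ ∈ (univ \ S₁).powersetCard k, μ {a} ^ (k ^ 2) := by
        refine sum_congr rfl fun S₁ hS₁ => sum_congr rfl fun S₂ hS₂ => ?_
        rw [mem_powersetCard, subset_sdiff] at hS₂
        rw [measure_pi_forall_sym2_eq μ hS₂.1.2.symm, (mem_powersetCard.1 hS₁).2, hS₂.2, sq]
    _ = _ := by
        rw [sum_congr rfl fun S₁ hS₁ => by
          rw [sum_const, card_powersetCard, card_sdiff_of_subset (subset_univ S₁), card_univ,
            (mem_powersetCard.1 hS₁).2]]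
        simp [mul_assoc]

end RandomGraph

lemma PMF.bernoulli_toMeasure_false {p : NNReal} (h : p ≤ 1) :
    (PMF.bernoulli p h).toMeasure {false} = ENNReal.ofReal (1 - p) := by
  rw [PMF.toMeasure_apply_singleton _ _ (measurableSet_singleton _), PMF.bernoulli_apply,
    cond_false, ← NNReal.coe_one, ← NNReal.coe_sub h, ENNReal.ofReal_coe_nnreal]

lemma measure_pi_bernoulli_exists_disjoint_forall_eq_false_le {V : Type*} [Fintype V]
    [DecidableEq V] {p : NNReal} (hp : p ≤ 1) (k : ℕ) :
    Measure.pi (fun _ : Sym2 V => (PMF.bernoulli p hp).toMeasure) {ω | ∃ S₁ S₂ : Finset V,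
        Disjoint S₁ S₂ ∧ #S₁ = k ∧ #S₂ = k ∧ ∀ u ∈ S₁, ∀ v ∈ S₂, ω s(u, v) = false}
      ≤ ENNReal.ofReal ((Fintype.card V).choose k * (Fintype.card V - k).choose k *
          (1 - p) ^ (k ^ 2)) := by
  have : (p : ℝ) ≤ 1 := hp
  rw [ENNReal.ofReal_mul (by positivity), ENNReal.ofReal_pow (by linarith),
    ENNReal.ofReal_mul (by positivity), ENNReal.ofReal_natCast, ENNReal.ofReal_natCast,
    ← PMF.bernoulli_toMeasure_false]
  exact measure_pi_exists_disjoint_forall_sym2_eq_le _ k false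

lemma Nat.choose_le_mul_exp_one_pow {m a k : ℕ} (h : m ≤ a * k) :
    (m.choose k : ℝ) ≤ (a * exp 1) ^ k :=
  calc (m.choose k : ℝ) ≤ (m : ℝ) ^ k / k.factorial := Nat.choose_le_pow_div k m
    _ ≤ ((a * k : ℕ) : ℝ) ^ k / k.factorial := by gcongr
    _ = a ^ k * ((k : ℝ) ^ k / k.factorial) := by push_cast; ring
    _ ≤ a ^ k * exp k := by gcongr; exact Real.pow_div_factorial_le_exp _ k.cast_nonneg k
    _ = (a * exp 1) ^ k := by rw [mul_pow, exp_one_pow]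

lemma choose_mul_choose_mul_one_sub_pow_le {n a k : ℕ} {p y : ℝ} (hp : p ≤ 1)
    (hn : n ≤ a * k) (hy : y ≤ p * k) :
    (n.choose k : ℝ) * (n - k).choose k * (1 - p) ^ (k ^ 2) ≤ ((a * exp 1) ^ 2 * exp (-y)) ^ k := by
  have hp' : (1 - p) ^ (k ^ 2) ≤ exp (-y) ^ k :=
    calc (1 - p) ^ (k ^ 2) ≤ exp (-p) ^ (k ^ 2) :=
          pow_le_pow_left₀ (by linarith) (one_sub_le_exp_neg p) _
      _ = exp (-(p * k)) ^ k := by rw [← exp_nat_mul, ← exp_nat_mul]; push_cast; ring_nf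
      _ ≤ exp (-y) ^ k := by gcongr
  calc (n.choose k : ℝ) * (n - k).choose k * (1 - p) ^ (k ^ 2)
      ≤ (a * exp 1) ^ k * (a * exp 1) ^ k * exp (-y) ^ k := by
        have : 0 ≤ (1 - p) ^ (k ^ 2) := pow_nonneg (by linarith) _
        gcongr ?_ * ?_ * ?_
        · exact Nat.choose_le_mul_exp_one_pow hn
        · exact Nat.choose_le_mul_exp_one_pow ((n.sub_le k).trans hn)
    _ = ((a * exp 1) ^ 2 * exp (-y)) ^ k := by ring

lemma sq_twelve_mul_exp_one_mul_exp_pow_le {c : ℝ} (hc : 100 ≤ c) {k : ℕ} (hk : 10 ≤ k) :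
    ((12 * exp 1) ^ 2 * exp (-0.1 * c)) ^ k ≤ exp (-30) := by
  have h144 : (144 : ℝ) ≤ exp 5 :=
    calc (144 : ℝ) ≤ 2.7182818283 ^ 5 := by norm_num
      _ ≤ exp 1 ^ 5 := by gcongr; exact exp_one_gt_d9.le
      _ = exp 5 := by rw [← exp_nat_mul]; norm_num
  have hbase : (12 * exp 1) ^ 2 * exp (-0.1 * c) ≤ exp (-3) :=
    calc (12 * exp 1) ^ 2 * exp (-0.1 * c) = 144 * exp (2 - 0.1 * c) := by
          rw [sub_eq_add_neg, exp_add, ← neg_mul, show exp 2 = exp 1 ^ 2 by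
            rw [← exp_nat_mul]; norm_num]
          ring
      _ ≤ exp 5 * exp (2 - 0.1 * c) := by gcongr
      _ ≤ exp (-3) := by rw [← exp_add]; gcongr; linarith
  calc ((12 * exp 1) ^ 2 * exp (-0.1 * c)) ^ k ≤ exp (-3) ^ k := by gcongr
    _ = exp (k * -3) := (exp_nat_mul _ k).symm
    _ ≤ exp (-30) := by
        gcongr
        have : (10 : ℝ) ≤ k := by exact_mod_cast hk
        linarith

lemma ceil_bounds_of_hundred_lt {x : ℝ} (hx : 100 < x) {n k : ℕ} (hn : n = ⌈1.2 * x⌉₊)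
    (hk : k = ⌈0.1 * x⌉₊) : 10 ≤ k ∧ n ≤ 12 * k ∧ 2 * k ≤ n ∧ x + 2 * k < n + 2 := by
  have hk₁ : 0.1 * x ≤ k := hk ▸ Nat.le_ceil _
  have hk₂ : (k : ℝ) < 0.1 * x + 1 := hk ▸ Nat.ceil_lt_add_one (by linarith)
  have hn₁ : 1.2 * x ≤ n := hn ▸ Nat.le_ceil _
  refine ⟨?_, hn ▸ Nat.ceil_le.2 (by push_cast; linarith), ?_, by linarith⟩
  · exact_mod_cast (show (10 : ℝ) ≤ k by linarith)
  · exact_mod_cast (show (2 * k : ℝ) ≤ n by linarith)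

lemma ofReal_one_sub_le_measure {Ω : Type*} [MeasurableSpace Ω] {μ : Measure Ω}
    [IsProbabilityMeasure μ] {E F : Set Ω} {δ : ℝ} (hδ : 0 ≤ δ) (hE : μ E ≤ ENNReal.ofReal δ)
    (hEF : Eᶜ ⊆ F) : ENNReal.ofReal (1 - δ) ≤ μ F := by
  rw [ENNReal.ofReal_sub _ hδ, ENNReal.ofReal_one, tsub_le_iff_right]
  calc 1 = μ (E ∪ Eᶜ) := by simp
    _ ≤ μ E + μ F := (measure_union_le _ _).trans (by gcongr)
    _ ≤ μ F + ENNReal.ofReal δ := by rw [add_comm]; gcongr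

lemma exists_isPath_fromRel_of_not_exists {V : Type*} [Fintype V] [DecidableEq V]
    {ω : Sym2 V → Bool} {k : ℕ} (hk : 2 * k ≤ Fintype.card V)
    (hω : ¬ ∃ S₁ S₂ : Finset V, Disjoint S₁ S₂ ∧ #S₁ = k ∧ #S₂ = k ∧
      ∀ u ∈ S₁, ∀ v ∈ S₂, ω s(u, v) = false) :
    ∃ u v, ∃ w : (SimpleGraph.fromRel fun a b => ω s(a, b) = true).Walk u v,
      w.IsPath ∧ Fintype.card V < w.length + 2 * k := by
  refine SimpleGraph.exists_isPath_of_forall_exists_adj k hk fun S₁ S₂ hd h₁ h₂ => ?_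
  push Not at hω
  obtain ⟨a, ha, b, hb, hab⟩ := hω S₁ S₂ hd h₁ h₂
  refine ⟨a, ha, b, hb, (SimpleGraph.fromRel_adj _ a b).2 ⟨?_, Or.inl (by simpa using hab)⟩⟩
  rintro rfl
  exact disjoint_left.1 hd ha hb

/-- For `p ∈ (0,1)`, `c > 100`, `n = ⌈1.2c/p⌉` and `k = ⌈0.1c/p⌉`, in `G(n,p)`
(each potential edge present independently with probability `p`): the probability
that some two disjoint `k`-subsets have no edge between them is at most
`(n choose k)·(n−k choose k)·(1−p)^{k²} ≤ ((12e)²·e^{−0.1c})^k ≤ e^{−30}`;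
consequently, with probability at least `1 − e^{−30}` the graph contains a simple
path on at least `c/p` vertices. -/
theorem stmt_6 (p : NNReal) (hp0 : 0 < p) (hp1 : p < 1) (c : ℝ) (hc : 100 < c)
    (n k : ℕ) (hn : n = ⌈1.2 * c / (p : ℝ)⌉₊) (hk : k = ⌈0.1 * c / (p : ℝ)⌉₊) :
    (Measure.pi (fun _ : Sym2 (Fin n) => (PMF.bernoulli p (by exact_mod_cast hp1.le)).toMeasure))
        {ω | ∃ S1 S2 : Finset (Fin n), Disjoint S1 S2 ∧ S1.card = k ∧ S2.card = k ∧
          ∀ u ∈ S1, ∀ v ∈ S2, ω s(u, v) = false}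
      ≤ ENNReal.ofReal
          ((n.choose k : ℝ) * ((n - k).choose k : ℝ) * (1 - (p : ℝ)) ^ (k^2)) ∧
    (n.choose k : ℝ) * ((n - k).choose k : ℝ) * (1 - (p : ℝ)) ^ (k^2)
      ≤ ((12 * Real.exp 1)^2 * Real.exp (-0.1 * c)) ^ k ∧
    ((12 * Real.exp 1)^2 * Real.exp (-0.1 * c)) ^ k ≤ Real.exp (-30) ∧
    ENNReal.ofReal (1 - Real.exp (-30)) ≤
      (Measure.pi (fun _ : Sym2 (Fin n) => (PMF.bernoulli p (by exact_mod_cast hp1.le)).toMeasure))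
        {ω | ∃ (u v : Fin n)
            (w : (SimpleGraph.fromRel (fun a b => ω s(a, b) = true)).Walk u v),
          w.IsPath ∧ c / (p : ℝ) ≤ (w.support.length : ℝ)} := by
  have hp : (0 : ℝ) < p := hp0
  have hp1' : (p : ℝ) ≤ 1 := by exact_mod_cast hp1.le
  have hpk : 0.1 * c ≤ p * k := by
    have := (div_le_iff₀ hp).1 (hk ▸ Nat.le_ceil (0.1 * c / p))
    linarith
  rw [mul_div_assoc] at hn hk
  obtain ⟨hk10, hn12k, h2kn, hnk⟩ :=
    ceil_bounds_of_hundred_lt (hc.trans_le (le_div_self (by linarith) hp hp1')) hn hk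
  have h1 := measure_pi_bernoulli_exists_disjoint_forall_eq_false_le (V := Fin n) hp1.le k
  rw [Fintype.card_fin] at h1
  have h2 := choose_mul_choose_mul_one_sub_pow_le hp1' hn12k hpk
  have h3 := sq_twelve_mul_exp_one_mul_exp_pow_le hc.le hk10
  rw [Nat.cast_ofNat, ← neg_mul] at h2
  refine ⟨h1, h2, h3, ofReal_one_sub_le_measure (Real.exp_pos _).le
    (h1.trans (ENNReal.ofReal_le_ofReal (h2.trans h3))) fun ω hω => ?_⟩
  obtain ⟨u, v, w, hw, hlen⟩ := exists_isPath_fromRel_of_not_exists (by simpa using h2kn) hω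
  refine ⟨u, v, w, hw, ?_⟩
  rw [Fintype.card_fin] at hlen
  have : (n : ℝ) + 1 ≤ w.length + 2 * k := by exact_mod_cast hlen
  rw [w.length_support]
  push_cast
  linarith
end
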